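/- Let G be a graph on ten vertices such that both G and its complement are minimally t-imperfect, with the standard 10-vertex labeling. If, for some i ∈ {1,…,5} (indices mod 5), neither u_iu_{i−1} nor u_iu_{i+1} is an edge of G, then u_{i−1}u_{i+1} is not an edge of G either. -/

import Mathlib

open SimpleGraph

namespace TP

/-- A set of vertices is independent: no two of its vertices are adjacent. -/
def IsIndep {V : Type*} (G : SimpleGraph V) (S : Set V) : Prop :=
  S.Pairwise fun u v => ¬ G.Adj u v

/-- The finite vertex set `s` induces a cycle of length `n` in `G`. -/
def IsInducedCycle {V : Type*} (G : SimpleGraph V) (n : ℕ) (s : Finset V) : Prop :=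
  3 ≤ n ∧ s.card = n ∧ Nonempty (G.induce (s : Set V) ≃g SimpleGraph.cycleGraph n)

/-- The polytope `P(G)` given by nonnegativity, edge and odd-cycle inequalities. -/
def tPolytope {V : Type*} [Fintype V] (G : SimpleGraph V) : Set (V → ℝ) :=
  {x | (∀ v, 0 ≤ x v ∧ x v ≤ 1) ∧
    (∀ ⦃u v⦄, G.Adj u v → x u + x v ≤ 1) ∧
    (∀ (n : ℕ) (s : Finset V), Odd n → IsInducedCycle G n s →
      ∑ v ∈ s, x v ≤ ((n : ℝ) - 1) / 2)}

/-- The independent set polytope: the convex hull of characteristic vectors of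
independent sets. -/
def stabPolytope {V : Type*} [Fintype V] (G : SimpleGraph V) : Set (V → ℝ) :=
  convexHull ℝ {x | ∃ S : Set V, IsIndep G S ∧ x = S.indicator fun _ => (1 : ℝ)}

/-- A graph is t-perfect if `P(G)` equals its independent set polytope. -/
def TPerfect {V : Type*} [Fintype V] (G : SimpleGraph V) : Prop :=
  tPolytope G = stabPolytope G

/-- The graph obtained from `G` by a t-contraction at `v` : the closed neighbourhood
of `v` is replaced by a single new vertex (`none`), adjacent to every vertex that had
a neighbour in the closed neighbourhood of `v`. -/
def tContract {V : Type*} (G : SimpleGraph V) (v : V) :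
    SimpleGraph (Option {w : V // w ≠ v ∧ ¬ G.Adj v w}) :=
  SimpleGraph.fromRel fun a b =>
    match a, b with
    | some a, some b => G.Adj a.1 b.1
    | some a, none => ∃ x, (x = v ∨ G.Adj v x) ∧ G.Adj a.1 x
    | none, _ => False

/-- A bundled finite simple graph. -/
structure FinGraph : Type 1 where
  V : Type
  [fintype : Fintype V]
  graph : SimpleGraph V

attribute [instance] FinGraph.fintype

def FinGraph.of {V : Type} [Fintype V] (G : SimpleGraph V) : FinGraph :=
  FinGraph.mk V G

/-- `B` is obtained from `A` by deleting one vertex (up to isomorphism). -/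
def DeleteStep (A B : FinGraph) : Prop :=
  ∃ v : A.V, Nonempty (B.graph ≃g A.graph.induce {w | w ≠ v})

/-- `B` is obtained from `A` by a t-contraction at a vertex whose neighbourhood is
independent (up to isomorphism). -/
def ContractStep (A B : FinGraph) : Prop :=
  ∃ v : A.V, IsIndep A.graph (A.graph.neighborSet v) ∧
    Nonempty (B.graph ≃g tContract A.graph v)

/-- One step: a vertex deletion or a t-contraction. -/
def Step (A B : FinGraph) : Prop := DeleteStep A B ∨ ContractStep A B

/-- `TMinor B A` : `B` is a t-minor of `A`, i.e. obtained from `A` by a sequence of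
vertex deletions and t-contractions. -/
def TMinor (B A : FinGraph) : Prop := Relation.ReflTransGen Step A B

/-- `B` is a proper t-minor of `A` : a t-minor with fewer vertices. -/
def ProperTMinor (B A : FinGraph) : Prop :=
  TMinor B A ∧ Fintype.card B.V < Fintype.card A.V

/-- A graph is minimally t-imperfect if it is not t-perfect but every proper t-minor
of it is t-perfect. -/
def MinimallyTImperfect {V : Type} [Fintype V] (G : SimpleGraph V) : Prop :=
  ¬ TPerfect G ∧ ∀ B : FinGraph, ProperTMinor B (FinGraph.of G) → TPerfect B.graph

/-- A core graph: every proper t-minor of `G` and every proper t-minor of its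
complement is t-perfect. -/
def IsCore {V : Type} [Fintype V] (G : SimpleGraph V) : Prop :=
  (∀ B : FinGraph, ProperTMinor B (FinGraph.of G) → TPerfect B.graph) ∧
  (∀ B : FinGraph, ProperTMinor B (FinGraph.of Gᶜ) → TPerfect B.graph)

/-- A partition of `V \ {v}` into `count` sets of size `size`, all satisfying `P`. -/
def CoverOff {V : Type*} (v : V) (count size : ℕ) (P : Finset V → Prop) : Prop :=
  ∃ f : Fin count → Finset V,
    (∀ i, P (f i) ∧ (f i).card = size) ∧
    (∀ i j, i ≠ j → Disjoint (f i) (f j)) ∧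
    (∀ i, v ∉ f i) ∧
    (∀ w, w ≠ v → ∃ i, w ∈ f i)

/-- `(p,q)`-partitionable graphs. -/
def PQPartitionable {V : Type*} [Fintype V] (G : SimpleGraph V) (p q : ℕ) : Prop :=
  2 ≤ p ∧ 2 ≤ q ∧ Fintype.card V = p * q + 1 ∧
  ∀ v : V,
    CoverOff v q p (fun S => IsIndep G (S : Set V)) ∧
    CoverOff v p q (fun S => G.IsClique (S : Set V))

/-- `G` has an odd hole: an induced odd cycle of length at least five. -/
def HasOddHole {V : Type*} (G : SimpleGraph V) : Prop :=
  ∃ (n : ℕ) (s : Finset V), Odd n ∧ 5 ≤ n ∧ IsInducedCycle G n s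

/-- A graph is perfect iff neither it nor its complement has an odd hole. -/
def GPerfect {V : Type*} (G : SimpleGraph V) : Prop :=
  ¬ HasOddHole G ∧ ¬ HasOddHole Gᶜ

/-- Every vertex has degree at least three and at most five. -/
def DegreeBounded {V : Type*} (G : SimpleGraph V) : Prop :=
  ∀ v, 3 ≤ (G.neighborSet v).ncard ∧ (G.neighborSet v).ncard ≤ 5

/-- The `n`-wheel: an `n`-cycle plus a vertex (`none`) adjacent to every cycle vertex. -/
def wheel (n : ℕ) : SimpleGraph (Option (Fin n)) :=
  SimpleGraph.fromRel fun a b =>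
    match a, b with
    | some i, some j => (SimpleGraph.cycleGraph n).Adj i j
    | none, some _ => True
    | _, none => False

/-- Vertex type of the standard 9-vertex labeling: `inl i` is `v_{i+1}`,
`inr j` is `u_{j+1}`. -/
abbrev V9 := Fin 5 ⊕ Fin 4

/-- Vertex type of the standard 10-vertex labeling. -/
abbrev V10 := Fin 5 ⊕ Fin 5

/-- The standard 9-vertex labeling: `v1 … v5` form a 5-hole; the neighbours of `u_i`
among the `v`'s are `v_{i+2}` and `v_{i+3}` together possibly with `v_i`. -/
def Std9 (G : SimpleGraph V9) : Prop :=
  (∀ i j : Fin 5, G.Adj (.inl i) (.inl j) ↔ (j = i + 1 ∨ i = j + 1)) ∧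
  (∀ (i : Fin 4) (k : Fin 5), G.Adj (.inr i) (.inl k) →
    k = i.castSucc + 2 ∨ k = i.castSucc + 3 ∨ k = i.castSucc) ∧
  (∀ i : Fin 4, G.Adj (.inr i) (.inl (i.castSucc + 2)) ∧ G.Adj (.inr i) (.inl (i.castSucc + 3)))

/-- The standard 10-vertex labeling. -/
def Std10 (G : SimpleGraph V10) : Prop :=
  (∀ i j : Fin 5, G.Adj (.inl i) (.inl j) ↔ (j = i + 1 ∨ i = j + 1)) ∧
  (∀ (i k : Fin 5), G.Adj (.inr i) (.inl k) → k = i + 2 ∨ k = i + 3 ∨ k = i) ∧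
  (∀ i : Fin 5, G.Adj (.inr i) (.inl (i + 2)) ∧ G.Adj (.inr i) (.inl (i + 3)))

/-- The 9-vertex graph of the standard labeling with prescribed `U`-edges and
prescribed extra edges `u_i v_i`. -/
def graph9 (uEdges : List (Fin 4 × Fin 4)) (extra : List (Fin 4)) : SimpleGraph V9 :=
  SimpleGraph.fromRel fun a b =>
    match a, b with
    | .inl i, .inl j => j = i + 1
    | .inr i, .inl k => k = i.castSucc + 2 ∨ k = i.castSucc + 3 ∨ (i ∈ extra ∧ k = i.castSucc)
    | .inl _, .inr _ => False
    | .inr i, .inr j => (i, j) ∈ uEdges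

/-- The 10-vertex graph of the standard labeling with prescribed `U`-edges and
prescribed extra edges `u_i v_i`. -/
def graph10 (uEdges : List (Fin 5 × Fin 5)) (extra : List (Fin 5)) : SimpleGraph V10 :=
  SimpleGraph.fromRel fun a b =>
    match a, b with
    | .inl i, .inl j => j = i + 1
    | .inr i, .inl k => k = i + 2 ∨ k = i + 3 ∨ (i ∈ extra ∧ k = i)
    | .inl _, .inr _ => False
    | .inr i, .inr j => (i, j) ∈ uEdges

/-- The graph `(12°435°1)`. -/
def G12435 : SimpleGraph V10 :=
  graph10 [(0,1),(1,3),(3,2),(2,4),(4,0)] [1,4]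

/-- The graph `(1°2°435°1°)`. -/
def G12435' : SimpleGraph V10 :=
  graph10 [(0,1),(1,3),(3,2),(2,4),(4,0)] [0,1,4]

/-!
A graph `H` on `n` vertices whose stable sets have at most `k` vertices, with `3k < n`, is not
t-perfect: the all-`1/3` vector lies in `P(H)` but has weight `n/3 > k`. Induced subgraphs are
t-minors, so neither `G` nor its complement has a proper induced subgraph on seven vertices with
no stable set of size three.

After rotating the labels we may take `i = 0`. Then `G` is determined by the seven undecided
`u`–`u` adjacencies and the five optional edges `u_j v_j`, and for each of these 4096 graphs a
kernel computation finds an `a` such that `G` has no stable triple on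
`{v_{a-1}, v_a, v_{a+1}} ∪ U - u_a` or no triangle on `{v_a, v_{a+2}, v_{a+3}} ∪ U - u_a`
(these ten sets were found by computer search).
-/

open Finset in
theorem not_tPerfect_of_isIndep_card_le {V : Type} [Fintype V] (G : SimpleGraph V) (k : ℕ)
    (hk : ∀ T : Finset V, IsIndep G T → T.card ≤ k) (hcard : 3 * k < Fintype.card V) :
    ¬ TPerfect G := by
  classical
  intro hG
  have hx : (fun _ => (1 / 3 : ℝ)) ∈ tPolytope G := by
    refine ⟨fun _ => by norm_num, fun _ _ _ => by norm_num, fun n s _ hs => ?_⟩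
    have hn : (3 : ℝ) ≤ n := by exact_mod_cast hs.1
    rw [sum_const, hs.2.1, nsmul_eq_mul]
    linarith
  have hsum : IsLinearMap ℝ fun x : V → ℝ => ∑ v, x v :=
    ⟨fun _ _ => sum_add_distrib, fun _ _ => (mul_sum _ _ _).symm⟩
  have hstab : stabPolytope G ⊆ {x | ∑ v, x v ≤ k} := by
    refine convexHull_min ?_ (convex_halfSpace_le hsum _)
    rintro _ ⟨S, hS, rfl⟩
    have hT := hk S.toFinset (by simpa using hS)
    have hfilter : univ.filter (· ∈ S) = S.toFinset := by ext; simp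
    show ∑ v, S.indicator (fun _ => (1 : ℝ)) v ≤ k
    simp only [Set.indicator_apply, sum_boole, hfilter]
    exact_mod_cast hT
  have h := hstab (hG ▸ hx)
  change ∑ _ : V, (1 / 3 : ℝ) ≤ k at h
  simp only [sum_const, card_univ, nsmul_eq_mul] at h
  have hc : (3 * k : ℝ) < Fintype.card V := by exact_mod_cast hcard
  linarith

theorem Step.of_iso {A B C : FinGraph} (h : Step A B) (e : C.graph ≃g B.graph) : Step A C := by
  rcases h with ⟨v, ⟨f⟩⟩ | ⟨v, hv, ⟨f⟩⟩
  · exact Or.inl ⟨v, ⟨e.trans f⟩⟩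
  · exact Or.inr ⟨v, hv, ⟨e.trans f⟩⟩

theorem transGen_step_of_iso {A B C : FinGraph} (h : Relation.TransGen Step A B)
    (e : C.graph ≃g B.graph) : Relation.TransGen Step A C := by
  cases h with
  | single h => exact .single (h.of_iso e)
  | tail h₁ h₂ => exact .tail h₁ (h₂.of_iso e)

theorem transGen_step_induce {V : Type} [Fintype V] (G : SimpleGraph V) (s : Set V) [Fintype s]
    (hs : s ≠ Set.univ) : Relation.TransGen Step (FinGraph.of G) (FinGraph.of (G.induce s)) := by
  classical
  obtain ⟨v, hv⟩ := (Set.ne_univ_iff_exists_notMem s).1 hs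
  set t : Set V := {w | w ≠ v}
  have hst : s ⊆ t := fun w hw hwv => hv (hwv ▸ hw)
  have hdel : Step (FinGraph.of G) (FinGraph.of (G.induce t)) := Or.inl ⟨v, ⟨.refl⟩⟩
  by_cases hts : s = t
  · exact .single (hdel.of_iso (⟨Equiv.setCongr hts, .rfl⟩ : G.induce s ≃g G.induce t))
  · have hne : {x : t | x.1 ∈ s} ≠ Set.univ := by
      rw [Ne, Set.eq_univ_iff_forall]
      exact fun h => hts (hst.antisymm fun w hw => h ⟨w, hw⟩)
    exact transGen_step_of_iso (.head hdel (transGen_step_induce (G.induce t) _ hne))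
      (⟨⟨fun a => ⟨⟨a, hst a.2⟩, a.2⟩, fun b => ⟨b.1, b.2⟩, fun _ => rfl, fun _ => rfl⟩, .rfl⟩ :
        G.induce s ≃g (G.induce t).induce {x : t | x.1 ∈ s})
termination_by Fintype.card V
decreasing_by
  classical
  exact Fintype.card_lt_of_injective_of_notMem Subtype.val Subtype.val_injective (b := v) (by simp)

theorem MinimallyTImperfect.exists_isIndep {V : Type} [Fintype V] {G : SimpleGraph V}
    (hG : MinimallyTImperfect G) {S : Finset V} {k : ℕ} (hS : S.card < Fintype.card V)
    (hk : 3 * k < S.card) : ∃ T ⊆ S, T.card = k + 1 ∧ IsIndep G T := by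
  classical
  by_contra! hnone
  have hne : (S : Set V) ≠ Set.univ := fun h => by
    have := Finset.card_le_card (Finset.coe_subset.1 (h ▸ Set.subset_univ _) : Finset.univ ⊆ S)
    rw [Finset.card_univ] at this
    omega
  have hcard : Fintype.card (S : Set V) = S.card := by simp
  have hperfect := hG.2 (FinGraph.of (G.induce (S : Set V)))
    ⟨(transGen_step_induce G _ hne).to_reflTransGen, hcard.trans_lt hS⟩
  refine not_tPerfect_of_isIndep_card_le _ k (fun T hT => ?_) (hk.trans_eq hcard.symm) hperfect
  by_contra! hTk
  obtain ⟨T', hT'T, hT'k⟩ := Finset.exists_subset_card_eq (Nat.succ_le_of_lt hTk)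
  refine hnone (T'.map (Function.Embedding.subtype _))
    (Finset.coe_subset.1 (Finset.map_subtype_subset _)) (by simpa using hT'k) ?_
  intro a ha b hb hab
  simp only [Finset.coe_map, Function.Embedding.subtype_apply, Set.mem_image] at ha hb
  obtain ⟨a, ha, rfl⟩ := ha
  obtain ⟨b, hb, rfl⟩ := hb
  exact hT (hT'T ha) (hT'T hb) (fun h => hab (congrArg _ h))

section NoIndepTriple

variable {V W : Type*}

def NoIndepTriple (H : SimpleGraph V) (S : List V) : Prop :=
  ∀ a ∈ S, ∀ b ∈ S, ∀ c ∈ S, a ≠ b → a ≠ c → b ≠ c → H.Adj a b ∨ H.Adj a c ∨ H.Adj b c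

theorem noIndepTriple_cons {H : SimpleGraph V} {x : V} {S : List V} :
    NoIndepTriple H (x :: S) ↔ NoIndepTriple H S ∧
      ∀ b ∈ S, ∀ c ∈ S, x ≠ b → x ≠ c → b ≠ c → H.Adj x b ∨ H.Adj x c ∨ H.Adj b c := by
  refine ⟨fun h => ⟨fun a ha b hb c hc => h a (.tail _ ha) b (.tail _ hb) c (.tail _ hc),
    fun b hb c hc => h x (.head _) b (.tail _ hb) c (.tail _ hc)⟩,
    fun ⟨hS, hx⟩ a ha b hb c hc hab hac hbc => ?_⟩
  rcases List.mem_cons.1 ha with rfl | ha' <;> rcases List.mem_cons.1 hb with rfl | hb' <;>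
    rcases List.mem_cons.1 hc with rfl | hc'
  all_goals first
    | exact absurd rfl ‹_›
    | exact hx _ ‹_› _ ‹_› ‹_› ‹_› ‹_›
    | exact hS a ha' b hb' c hc' hab hac hbc
    | skip
  · have := hx a ha' c hc' hab.symm hbc hac
    rw [H.adj_comm a b]
    tauto
  · have := hx a ha' b hb' hac.symm hbc.symm hab
    rw [H.adj_comm a c, H.adj_comm b c]
    tauto

-- A third vertex is only inspected for non-adjacent pairs, which keeps the kernel
-- computation in `graph10_exists_noIndepTriple` fast.
def noIndepTripleB [DecidableEq V] (H : SimpleGraph V) [DecidableRel H.Adj] : List V → Bool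
  | [] => true
  | x :: S => noIndepTripleB H S && S.all fun b =>
      x = b || H.Adj x b || S.all fun c => c = x || c = b || H.Adj x c || H.Adj b c

theorem noIndepTripleB_iff [DecidableEq V] (H : SimpleGraph V) [DecidableRel H.Adj] (S : List V) :
    noIndepTripleB H S = true ↔ NoIndepTriple H S := by
  induction S with
  | nil => simp [noIndepTripleB, NoIndepTriple]
  | cons x S ih =>
    simp only [noIndepTripleB, Bool.and_eq_true, List.all_eq_true, Bool.or_eq_true,
      decide_eq_true_eq, ih, noIndepTriple_cons]
    refine and_congr_right fun _ => forall₂_congr fun b hb => ⟨?_, fun h => ?_⟩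
    · rintro ((hxb | hxb) | h) c hc hxb' hxc hbc
      · exact absurd hxb hxb'
      · exact Or.inl hxb
      · rcases h c hc with (((hcx | hcb) | hxc') | hbc')
        · exact absurd hcx.symm hxc
        · exact absurd hcb hbc.symm
        · exact Or.inr (Or.inl hxc')
        · exact Or.inr (Or.inr hbc')
    · by_cases hxb : x = b
      · exact Or.inl (Or.inl hxb)
      by_cases hadj : H.Adj x b
      · exact Or.inl (Or.inr hadj)
      refine Or.inr fun c hc => ?_
      by_cases hcx : c = x
      · exact Or.inl (Or.inl (Or.inl hcx))
      by_cases hcb : c = b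
      · exact Or.inl (Or.inl (Or.inr hcb))
      have := h c hc hxb (Ne.symm hcx) (Ne.symm hcb)
      tauto

instance [DecidableEq V] (H : SimpleGraph V) [DecidableRel H.Adj] (S : List V) :
    Decidable (NoIndepTriple H S) :=
  decidable_of_iff _ (noIndepTripleB_iff H S)

theorem NoIndepTriple.map {H : SimpleGraph V} {G : SimpleGraph W} {S : List V} (φ : H ↪g G)
    (h : NoIndepTriple H S) : NoIndepTriple G (S.map φ) := by
  simp only [NoIndepTriple, List.mem_map, forall_exists_index, and_imp]
  rintro _ a ha rfl _ b hb rfl _ c hc rfl hab hac hbc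
  simpa only [φ.map_adj_iff] using
    h a ha b hb c hc (ne_of_apply_ne φ hab) (ne_of_apply_ne φ hac) (ne_of_apply_ne φ hbc)

end NoIndepTriple

theorem MinimallyTImperfect.not_noIndepTriple {V : Type} [Fintype V] [DecidableEq V]
    {G : SimpleGraph V} (hG : MinimallyTImperfect G) {S : List V} (hS : S.Nodup)
    (h6 : 6 < S.length) (hlt : S.length < Fintype.card V) : ¬ NoIndepTriple G S := by
  intro h
  rw [← List.toFinset_card_of_nodup hS] at h6 hlt
  obtain ⟨T, hTS, hT3, hT⟩ := hG.exists_isIndep (k := 2) hlt h6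
  obtain ⟨a, b, c, hab, hac, hbc, rfl⟩ := Finset.card_eq_three.1 hT3
  simp only [Finset.insert_subset_iff, Finset.singleton_subset_iff, List.mem_toFinset] at hTS
  rcases h a hTS.1 b hTS.2.1 c hTS.2.2 hab hac hbc with hadj | hadj | hadj
  · exact hT (by simp) (by simp) hab hadj
  · exact hT (by simp) (by simp) hac hadj
  · exact hT (by simp) (by simp) hbc hadj

def rot (i : Fin 5) : V10 ≃ V10 := Equiv.sumCongr (Equiv.addLeft i) (Equiv.addLeft i)

@[simp] theorem rot_inl (i j : Fin 5) : rot i (.inl j) = .inl (i + j) := rfl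

@[simp] theorem rot_inr (i j : Fin 5) : rot i (.inr j) = .inr (i + j) := rfl

theorem Std10.adj_inr_inl_iff {G : SimpleGraph V10} (h : Std10 G) (j k : Fin 5) :
    G.Adj (.inr j) (.inl k) ↔ k = j + 2 ∨ k = j + 3 ∨ (G.Adj (.inr j) (.inl j) ∧ k = j) := by
  refine ⟨fun hjk => ?_, ?_⟩
  · rcases h.2.1 j k hjk with rfl | rfl | rfl <;> simp_all
  · rintro (rfl | rfl | ⟨hj, rfl⟩)
    exacts [(h.2.2 j).1, (h.2.2 j).2, hj]

theorem Std10.comap_rot {G : SimpleGraph V10} (h : Std10 G) (i : Fin 5) :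
    Std10 (G.comap (rot i)) := by
  refine ⟨fun j k => ?_, fun j k hjk => ?_, fun j => ?_⟩
  · simp only [comap_adj, rot_inl, h.1, add_assoc, add_right_inj]
  · simpa [add_assoc] using h.2.1 (i + j) (i + k) hjk
  · simpa [add_assoc] using h.2.2 (i + j)

def uPairs : List (Fin 5 × Fin 5) :=
  [(0, 1), (0, 2), (0, 3), (0, 4), (1, 2), (1, 3), (1, 4), (2, 3), (2, 4), (3, 4)]

theorem mem_uPairs {p : Fin 5 × Fin 5} : p ∈ uPairs ↔ p.1 < p.2 := by
  revert p
  decide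

theorem Std10.eq_graph10 {G : SimpleGraph V10} [DecidableRel G.Adj] (h : Std10 G) :
    G = graph10 (uPairs.filter fun p => G.Adj (.inr p.1) (.inr p.2))
      ((List.finRange 5).filter fun j => G.Adj (.inr j) (.inl j)) := by
  ext (j | j) (k | k)
  · have hne : ∀ j k : Fin 5, k = j + 1 ∨ j = k + 1 → j ≠ k := by decide
    simpa [graph10, h.1] using hne j k
  · rw [G.adj_comm, h.adj_inr_inl_iff]
    simp [graph10]
  · rw [h.adj_inr_inl_iff]
    simp [graph10]
  · simp only [graph10, fromRel_adj, ne_eq, Sum.inr.injEq, List.mem_filter, mem_uPairs,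
      decide_eq_true_eq, G.adj_comm (.inr k)]
    rcases lt_trichotomy j k with hjk | rfl | hjk
    · simp [hjk, hjk.ne, hjk.not_gt]
    · simp
    · simp [hjk, hjk.ne', hjk.not_gt]

instance (uE : List (Fin 5 × Fin 5)) (X : List (Fin 5)) : DecidableRel (graph10 uE X).Adj
  | .inl j, .inl k => inferInstanceAs (Decidable (_ ∧ (k = j + 1 ∨ j = k + 1)))
  | .inr j, .inl k =>
    inferInstanceAs (Decidable (_ ∧ ((k = j + 2 ∨ k = j + 3 ∨ (j ∈ X ∧ k = j)) ∨ False)))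
  | .inl k, .inr j =>
    inferInstanceAs (Decidable (_ ∧ (False ∨ (k = j + 2 ∨ k = j + 3 ∨ (j ∈ X ∧ k = j)))))
  | .inr j, .inr k => inferInstanceAs (Decidable (_ ∧ ((j, k) ∈ uE ∨ (k, j) ∈ uE)))

def alphaTwoSet (a : Fin 5) : List V10 :=
  [.inl (a + 4), .inl a, .inl (a + 1), .inr (a + 1), .inr (a + 2), .inr (a + 3), .inr (a + 4)]

def triangleFreeSet (a : Fin 5) : List V10 :=
  [.inl a, .inl (a + 2), .inl (a + 3), .inr (a + 1), .inr (a + 2), .inr (a + 3), .inr (a + 4)]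

theorem alphaTwoSet_nodup : ∀ a, (alphaTwoSet a).Nodup := by decide

theorem triangleFreeSet_nodup : ∀ a, (triangleFreeSet a).Nodup := by decide

set_option maxHeartbeats 0 in
theorem graph10_exists_noIndepTriple :
    ∀ uE ∈ uPairs.sublists, ∀ X ∈ (List.finRange 5).sublists,
      ¬ (graph10 uE X).Adj (.inr 0) (.inr 4) → ¬ (graph10 uE X).Adj (.inr 0) (.inr 1) →
      (graph10 uE X).Adj (.inr 4) (.inr 1) →
      ∃ a, NoIndepTriple (graph10 uE X) (alphaTwoSet a) ∨
        NoIndepTriple (graph10 uE X)ᶜ (triangleFreeSet a) := by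
  decide +kernel

/-- if both `G` and its complement are minimally t-imperfect (standard
10-vertex labeling) and neither `u_iu_{i-1}` nor `u_iu_{i+1}` is an edge, then
`u_{i-1}u_{i+1}` is not an edge either. -/
theorem stmt15 (G : SimpleGraph V10)
    (hG : MinimallyTImperfect G) (hGc : MinimallyTImperfect Gᶜ)
    (hstd : Std10 G) (i : Fin 5)
    (h1 : ¬ G.Adj (.inr i) (.inr (i - 1))) (h2 : ¬ G.Adj (.inr i) (.inr (i + 1))) :
    ¬ G.Adj (.inr (i - 1)) (.inr (i + 1)) := by
  classical
  intro h3
  obtain ⟨uE, huE, X, hX, hH⟩ : ∃ uE ∈ uPairs.sublists, ∃ X ∈ (List.finRange 5).sublists,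
      G.comap (rot i) = graph10 uE X :=
    ⟨_, List.mem_sublists.2 List.filter_sublist, _, List.mem_sublists.2 List.filter_sublist,
      (hstd.comap_rot i).eq_graph10⟩
  have hi : i + 4 = i - 1 := (by decide : ∀ j : Fin 5, j + 4 = j - 1) i
  obtain ⟨a, ha | ha⟩ := graph10_exists_noIndepTriple uE huE X hX
    (by simpa [← hH, hi] using h1) (by simpa [← hH] using h2) (by simpa [← hH, hi] using h3)
  · rw [← hH] at ha
    exact hG.not_noIndepTriple ((alphaTwoSet_nodup a).map (rot i).injective)
      (by simp [alphaTwoSet]) (by simp [alphaTwoSet]) (ha.map (Iso.comap (rot i) G).toEmbedding)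
  · rw [← hH] at ha
    exact hGc.not_noIndepTriple ((triangleFreeSet_nodup a).map (rot i).injective)
      (by simp [triangleFreeSet]) (by simp [triangleFreeSet])
      (ha.map (Embedding.complEquiv (Iso.comap (rot i) G).toEmbedding))

end TP
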